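/- For k∈ℕ set l_k := (3/2)^{k/2}, s_k := ⌊l_k^{1/3}⌋ and δ_k := (1/8)·√(l_k) − 2, and let 𝔽_k be the set of all rectangles Λ⊂ℤ² (sets of the form ([a₁,b₁]×[a₂,b₂])∩ℤ²) which, modulo translations and permutation of the two coordinates, are contained in [0,l_{k+1}]×[0,l_{k+2}]. Then for every k≥1 and every Λ∈𝔽_k∖𝔽_{k−1} there exists a finite sequence {(Λ₁^{(i)},Λ₂^{(i)})}_{i=1}^{s_k} of pairs of rectangles in 𝔽_{k−1} such that: (i) Λ = Λ₁^{(i)} ∪ Λ₂^{(i)} for every i; (ii) d(Λ∖Λ₁^{(i)}, Λ∖Λ₂^{(i)}) ≥ δ_k for every i; (iii) (Λ₁^{(i)}∩Λ₂^{(i)}) ∩ (Λ₁^{(j)}∩Λ₂^{(j)}) = ∅ whenever i≠j. -/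

import Mathlib

noncomputable section

/-- The length scale `l_k = (3/2)^{k/2}`. -/
def lk (k : ℕ) : ℝ := (3 / 2 : ℝ) ^ ((k : ℝ) / 2)

/-- `s_k = ⌊l_k^{1/3}⌋`. -/
def sk (k : ℕ) : ℕ := ⌊(lk k) ^ ((1 : ℝ) / 3)⌋₊

/-- `δ_k = (1/8)√(l_k) − 2`. -/
def dk (k : ℕ) : ℝ := (1 / 8) * Real.sqrt (lk k) - 2

/-- The `ℓ¹` (graph) distance on `ℤ²`, as a real number. -/
def dist1 (x y : ℤ × ℤ) : ℝ := ((|x.1 - y.1| + |x.2 - y.2| : ℤ) : ℝ)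

/-- `Λ` belongs to the class `𝔽_k`: it is a rectangle of `ℤ²` which, modulo translations
and permutation of the two coordinates, is contained in `[0, l_{k+1}] × [0, l_{k+2}]`. -/
def memF (k : ℕ) (Λ : Finset (ℤ × ℤ)) : Prop :=
  ∃ a b : ℤ × ℤ, a.1 ≤ b.1 ∧ a.2 ≤ b.2 ∧ Λ = Finset.Icc a b ∧
    ((min (b.1 - a.1) (b.2 - a.2) : ℤ) : ℝ) ≤ lk (k + 1) ∧
    ((max (b.1 - a.1) (b.2 - a.2) : ℤ) : ℝ) ≤ lk (k + 2)

end

/-!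
Cut `Λ` across its long side `n`, which satisfies `l_k < n ≤ 3/2 l_k`. If the two pieces overlap
in a strip of `t_k` columns, every point of `Λ ∖ Λ₁` lies `t_k + 1 ≥ δ_k` columns to the right of
every point of `Λ ∖ Λ₂`. Placing `s_k` such strips at spacing `t_k + 1`, starting `⌊l_k⌋` columns
from the right edge, both pieces of every cut have long side at most `⌊l_k⌋`, hence lie in
`𝔽_{k−1}`; this fits because `s_k (t_k + 1) ≤ l_k^{1/3} √l_k / 8 ≤ l_k / 2 + 1` while
`n ≤ 3/2 l_k`.
-/

open Finset

lemma lk_mono : Monotone lk := fun m n hmn =>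
  Real.rpow_le_rpow_of_exponent_le (by norm_num) (by gcongr)

lemma one_le_lk (k : ℕ) : 1 ≤ lk k := by
  simpa [lk] using lk_mono (Nat.zero_le k)

lemma lk_add_two (k : ℕ) : lk (k + 2) = 3 / 2 * lk k := by
  rw [lk, lk, Nat.cast_add, Nat.cast_ofNat, add_div, div_self two_ne_zero,
    Real.rpow_add (by norm_num), Real.rpow_one, mul_comm]

lemma rpow_one_third_le_half_add_one {L : ℝ} (hL : 0 ≤ L) : L ^ (1 / 3 : ℝ) ≤ L / 2 + 1 := by
  set y := L ^ (1 / 3 : ℝ)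
  have hy : 0 ≤ y := Real.rpow_nonneg hL _
  have hy3 : y ^ 3 = L := by
    rw [← Real.rpow_natCast, ← Real.rpow_mul hL]
    norm_num
  nlinarith [mul_nonneg hy (sq_nonneg (y - 1)), sq_nonneg (y - 3 / 4)]

lemma rpow_one_third_le_sqrt {L : ℝ} (hL : 1 ≤ L) : L ^ (1 / 3 : ℝ) ≤ √L := by
  rw [Real.sqrt_eq_rpow]
  exact Real.rpow_le_rpow_of_exponent_le hL (by norm_num)

/-- The width `t_k` of the overlap `Λ₁ ∩ Λ₂`, the least natural number with `δ_k ≤ t_k + 1`. -/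
noncomputable def overlapWidth (k : ℕ) : ℕ := ⌈√(lk k) / 8 - 3⌉₊

lemma dk_le_overlapWidth_add_one (k : ℕ) : dk k ≤ overlapWidth k + 1 := by
  have := Nat.le_ceil (√(lk k) / 8 - 3)
  rw [dk, overlapWidth]
  linarith

lemma overlapWidth_add_one_le (k : ℕ) : (overlapWidth k : ℝ) + 1 ≤ max 1 (√(lk k) / 8) := by
  rcases le_or_gt (√(lk k) / 8 - 3) 0 with h | h
  · simp [overlapWidth, Nat.ceil_eq_zero.mpr h]
  · have := Nat.ceil_lt_add_one h.le
    rw [overlapWidth]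
    exact le_max_of_le_right (by linarith)

lemma sk_mul_overlapWidth_add_one_le (k : ℕ) :
    (sk k : ℝ) * (overlapWidth k + 1) ≤ lk k / 2 + 1 := by
  have hL := one_le_lk k
  have hs : (sk k : ℝ) ≤ lk k ^ (1 / 3 : ℝ) := Nat.floor_le (Real.rpow_nonneg (by linarith) _)
  have hsL := rpow_one_third_le_sqrt hL
  have hsq : √(lk k) * √(lk k) = lk k := Real.mul_self_sqrt (by linarith)
  calc (sk k : ℝ) * (overlapWidth k + 1)
      ≤ lk k ^ (1 / 3 : ℝ) * max 1 (√(lk k) / 8) :=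
        mul_le_mul hs (overlapWidth_add_one_le k) (by positivity) (by positivity)
    _ ≤ lk k / 2 + 1 := by
        rcases max_cases 1 (√(lk k) / 8) with ⟨h, -⟩ | ⟨h, -⟩ <;> rw [h]
        · simpa using rpow_one_third_le_half_add_one (by linarith : 0 ≤ lk k)
        · nlinarith [Real.sqrt_nonneg (lk k)]

lemma long_side_add_sk_mul_le (k : ℕ) {n : ℤ} (hn : (n : ℝ) ≤ lk (k + 2)) :
    n + (sk k : ℤ) * (overlapWidth k + 1) ≤ 2 * ⌊lk k⌋ + 2 := by
  have hfl := Int.sub_one_lt_floor (lk k)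
  have := sk_mul_overlapWidth_add_one_le k
  rw [lk_add_two] at hn
  have : ((n + (sk k : ℤ) * (overlapWidth k + 1) : ℤ) : ℝ) < ((2 * ⌊lk k⌋ + 2 + 1 : ℤ) : ℝ) := by
    push_cast
    linarith
  exact Int.lt_add_one_iff.mp (by exact_mod_cast this)

lemma memF_Icc {m : ℕ} {a b : ℤ × ℤ} (hab : a ≤ b) (h₁ : ((b.1 - a.1 : ℤ) : ℝ) ≤ lk (m + 1))
    (h₂ : ((b.2 - a.2 : ℤ) : ℝ) ≤ lk (m + 2)) : memF m (Icc a b) := by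
  refine ⟨a, b, hab.1, hab.2, rfl, ?_, ?_⟩
  · exact le_trans (by exact_mod_cast min_le_left _ _) h₁
  · rw [Int.cast_max]
    exact max_le (h₁.trans (lk_mono (by omega))) h₂

lemma lk_lt_of_not_memF_Icc {m : ℕ} {a b : ℤ × ℤ} (hab : a ≤ b) (h : ¬ memF m (Icc a b)) :
    lk (m + 1) < ((max (b.1 - a.1) (b.2 - a.2) : ℤ) : ℝ) := by
  by_contra! hle
  exact h ⟨a, b, hab.1, hab.2, rfl, le_trans (by exact_mod_cast min_le_max) hle,
    hle.trans (lk_mono (by omega))⟩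

lemma le_dist1 (x y : ℤ × ℤ) : ((x.1 - y.1 : ℤ) : ℝ) ≤ dist1 x y := by
  rw [dist1]
  exact_mod_cast (le_abs_self _).trans (le_add_of_nonneg_right (abs_nonneg _))

lemma dist1_swap (x y : ℤ × ℤ) : dist1 x.swap y.swap = dist1 x y := by
  simp only [dist1, Prod.fst_swap, Prod.snd_swap, add_comm]

section Cut

variable {a b z : ℤ × ℤ} {p q : ℤ}

lemma Icc_eq_union_of_cut (hp : a.1 ≤ p) (hpq : p ≤ q + 1) (hq : q ≤ b.1) :
    Icc a b = Icc a (q, b.2) ∪ Icc (p, a.2) b := by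
  ext z
  simp only [mem_union, mem_Icc, Prod.le_def]
  omega

lemma lt_fst_of_mem_sdiff_Icc_left (hz : z ∈ Icc a b \ Icc a (q, b.2)) : q < z.1 := by
  simp only [mem_sdiff, mem_Icc, Prod.le_def] at hz
  omega

lemma fst_lt_of_mem_sdiff_Icc_right (hz : z ∈ Icc a b \ Icc (p, a.2) b) : z.1 < p := by
  simp only [mem_sdiff, mem_Icc, Prod.le_def] at hz
  omega

lemma fst_mem_of_mem_inter_cut (hz : z ∈ Icc a (q, b.2) ∩ Icc (p, a.2) b) :
    p ≤ z.1 ∧ z.1 ≤ q := by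
  simp only [mem_inter, mem_Icc, Prod.le_def] at hz
  omega

end Cut

lemma map_prodComm_Icc {α β : Type*} [Preorder α] [Preorder β] [LocallyFiniteOrder α]
    [LocallyFiniteOrder β] [DecidableLE (α × β)] [DecidableLE (β × α)] (a b : α × β) :
    (Icc a b).map (Equiv.prodComm α β).toEmbedding = Icc a.swap b.swap := by
  ext z
  simp only [mem_map_equiv, mem_Icc, Prod.le_def, Equiv.prodComm_symm, Equiv.prodComm_apply,
    Prod.fst_swap, Prod.snd_swap]
  tauto

lemma memF.map_prodComm {m : ℕ} {S : Finset (ℤ × ℤ)} (h : memF m S) :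
    memF m (S.map (Equiv.prodComm ℤ ℤ).toEmbedding) := by
  obtain ⟨a, b, h₁, h₂, rfl, hmin, hmax⟩ := h
  refine ⟨a.swap, b.swap, h₂, h₁, map_prodComm_Icc a b, ?_, ?_⟩
  · simpa [min_comm] using hmin
  · simpa [max_comm] using hmax

def IsBisectionFamily (k : ℕ) (Λ : Finset (ℤ × ℤ)) (Λ₁ Λ₂ : Fin (sk k) → Finset (ℤ × ℤ)) :
    Prop :=
  (∀ i, memF (k - 1) (Λ₁ i)) ∧ (∀ i, memF (k - 1) (Λ₂ i)) ∧
    (∀ i, Λ = Λ₁ i ∪ Λ₂ i) ∧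
    (∀ i, ∀ x ∈ Λ \ Λ₁ i, ∀ y ∈ Λ \ Λ₂ i, dk k ≤ dist1 x y) ∧
    (∀ i j, i ≠ j → (Λ₁ i ∩ Λ₂ i) ∩ (Λ₁ j ∩ Λ₂ j) = ∅)

lemma IsBisectionFamily.map_prodComm {k : ℕ} {Λ : Finset (ℤ × ℤ)}
    {Λ₁ Λ₂ : Fin (sk k) → Finset (ℤ × ℤ)} (h : IsBisectionFamily k Λ Λ₁ Λ₂) :
    IsBisectionFamily k (Λ.map (Equiv.prodComm ℤ ℤ).toEmbedding)
      (fun i => (Λ₁ i).map (Equiv.prodComm ℤ ℤ).toEmbedding)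
      (fun i => (Λ₂ i).map (Equiv.prodComm ℤ ℤ).toEmbedding) := by
  obtain ⟨h₁, h₂, hunion, hdist, hdisj⟩ := h
  refine ⟨fun i => (h₁ i).map_prodComm, fun i => (h₂ i).map_prodComm, fun i => ?_,
    fun i x hx y hy => ?_, fun i j hij => ?_⟩
  · rw [hunion i, map_union]
  · rw [← Finset.map_sdiff, mem_map_equiv] at hx hy
    simpa [dist1_swap] using hdist i _ hx _ hy
  · simp only [← Finset.map_inter, hdisj i j hij, map_empty]

/-- A rectangle whose horizontal side `n` satisfies `l_k < n ≤ l_{k+2}` and whose vertical side is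
at most `l_{k+1}` is cut along the columns `p i ≤ x ≤ p i + t - 1`, `p i = b.1 - ⌊l_k⌋ + i (t + 1)`,
where `t = t_k`: both pieces then have horizontal side at most `⌊l_k⌋`. -/
lemma exists_isBisectionFamily_Icc_of_long_fst (k : ℕ) {a b : ℤ × ℤ} (hab : a ≤ b)
    (hlong : lk k < ((b.1 - a.1 : ℤ) : ℝ)) (hn : ((b.1 - a.1 : ℤ) : ℝ) ≤ lk (k + 2))
    (hm : ((b.2 - a.2 : ℤ) : ℝ) ≤ lk (k + 1)) :
    ∃ Λ₁ Λ₂ : Fin (sk k) → Finset (ℤ × ℤ), IsBisectionFamily k (Icc a b) Λ₁ Λ₂ := by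
  set t : ℤ := (overlapWidth k : ℤ)
  set fl : ℤ := ⌊lk k⌋
  set p : Fin (sk k) → ℤ := fun i => b.1 - fl + i * (t + 1)
  have ht : 0 ≤ t := Int.natCast_nonneg _
  have hfl : (fl : ℝ) ≤ lk k := Int.floor_le _
  have hfl_lt : fl < b.1 - a.1 := by exact_mod_cast hfl.trans_lt hlong
  have hkey := long_side_add_sk_mul_le k hn
  have hp_nonneg (i : Fin (sk k)) : 0 ≤ (i : ℤ) * (t + 1) := by positivity
  have hwidth (i : Fin (sk k)) : p i + t - 1 - a.1 ≤ fl := by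
    have : ((i : ℤ) + 1) * (t + 1) ≤ sk k * (t + 1) :=
      mul_le_mul_of_nonneg_right (by exact_mod_cast i.isLt) (by omega)
    simp only [p]
    linarith
  have hpiece {c d : ℤ × ℤ} (hcd : c ≤ d) (hw : d.1 - c.1 ≤ fl) (hh : d.2 - c.2 = b.2 - a.2) :
      memF (k - 1) (Icc c d) := by
    refine memF_Icc hcd ((Int.cast_le.mpr hw).trans (hfl.trans (lk_mono (by omega)))) ?_
    rw [hh]
    exact hm.trans (lk_mono (by omega))
  refine ⟨fun i => Icc a (p i + t - 1, b.2), fun i => Icc (p i, a.2) b,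
    fun i => hpiece ⟨by linarith [hwidth i, hp_nonneg i], hab.2⟩ (by simpa using hwidth i) rfl,
    fun i => hpiece ⟨?_, hab.2⟩ ?_ rfl,
    fun i => Icc_eq_union_of_cut ?_ (by omega) ?_, fun i x hx y hy => ?_, fun i j hij => ?_⟩
  · linarith [hwidth i]
  · linarith [hp_nonneg i]
  · linarith [hp_nonneg i]
  · linarith [hwidth i]
  · have hx' := lt_fst_of_mem_sdiff_Icc_left hx
    have hy' := fst_lt_of_mem_sdiff_Icc_right hy
    calc dk k ≤ ((t + 1 : ℤ) : ℝ) := by exact_mod_cast dk_le_overlapWidth_add_one k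
      _ ≤ ((x.1 - y.1 : ℤ) : ℝ) := by exact_mod_cast (by omega : t + 1 ≤ x.1 - y.1)
      _ ≤ dist1 x y := le_dist1 x y
  · have hsep {i j : Fin (sk k)} (hij : i < j) : p i + t - 1 < p j := by
      have : ((i : ℤ) + 1) * (t + 1) ≤ j * (t + 1) :=
        mul_le_mul_of_nonneg_right (by exact_mod_cast hij) (by omega)
      simp only [p]
      linarith
    refine eq_empty_of_forall_notMem fun z hz => ?_
    rw [mem_inter] at hz
    have hzi := fst_mem_of_mem_inter_cut hz.1
    have hzj := fst_mem_of_mem_inter_cut hz.2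
    rcases lt_or_gt_of_ne hij with h | h
    · linarith [hsep h]
    · linarith [hsep h]

lemma exists_isBisectionFamily_Icc (k : ℕ) {a b : ℤ × ℤ} (hab : a ≤ b)
    (hlong : lk k < ((max (b.1 - a.1) (b.2 - a.2) : ℤ) : ℝ))
    (hmax : ((max (b.1 - a.1) (b.2 - a.2) : ℤ) : ℝ) ≤ lk (k + 2))
    (hmin : ((min (b.1 - a.1) (b.2 - a.2) : ℤ) : ℝ) ≤ lk (k + 1)) :
    ∃ Λ₁ Λ₂ : Fin (sk k) → Finset (ℤ × ℤ), IsBisectionFamily k (Icc a b) Λ₁ Λ₂ := by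
  rcases le_total (b.2 - a.2) (b.1 - a.1) with h | h
  · rw [max_eq_left h] at hlong hmax
    rw [min_eq_right h] at hmin
    exact exists_isBisectionFamily_Icc_of_long_fst k hab hlong hmax hmin
  · rw [max_eq_right h] at hlong hmax
    rw [min_eq_left h] at hmin
    obtain ⟨Λ₁, Λ₂, hfam⟩ :=
      exists_isBisectionFamily_Icc_of_long_fst k (a := a.swap) (b := b.swap) ⟨hab.2, hab.1⟩
        hlong hmax hmin
    have hswap := hfam.map_prodComm
    rw [map_prodComm_Icc, Prod.swap_swap, Prod.swap_swap] at hswap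
    exact ⟨_, _, hswap⟩

theorem bisection_lemma_general (k : ℕ) (Λ : Finset (ℤ × ℤ))
    (hΛ : memF k Λ) (hΛ' : ¬ memF (k - 1) Λ) :
    ∃ Λ₁ Λ₂ : Fin (sk k) → Finset (ℤ × ℤ),
      (∀ i, memF (k - 1) (Λ₁ i)) ∧ (∀ i, memF (k - 1) (Λ₂ i)) ∧
      (∀ i, Λ = Λ₁ i ∪ Λ₂ i) ∧
      (∀ i, ∀ x ∈ Λ \ Λ₁ i, ∀ y ∈ Λ \ Λ₂ i, dk k ≤ dist1 x y) ∧
      (∀ i j, i ≠ j → (Λ₁ i ∩ Λ₂ i) ∩ (Λ₁ j ∩ Λ₂ j) = ∅) := by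
  obtain ⟨a, b, h₁, h₂, rfl, hmin, hmax⟩ := hΛ
  have hlong :=
    (lk_mono (show k ≤ k - 1 + 1 by omega)).trans_lt (lk_lt_of_not_memF_Icc ⟨h₁, h₂⟩ hΛ')
  exact exists_isBisectionFamily_Icc k ⟨h₁, h₂⟩ hlong hmax hmin

/-- Every rectangle `Λ ∈ 𝔽_k ∖ 𝔽_{k−1}` can be written, in `s_k`
different ways, as a slightly overlapping union `Λ = Λ₁ ∪ Λ₂` of two rectangles of
`𝔽_{k−1}` with `d(Λ∖Λ₁, Λ∖Λ₂) ≥ δ_k`, the `s_k` overlaps `Λ₁ ∩ Λ₂` being pairwise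
disjoint. -/
theorem bisection_lemma (k : ℕ) (hk : 1 ≤ k) (Λ : Finset (ℤ × ℤ))
    (hΛ : memF k Λ) (hΛ' : ¬ memF (k - 1) Λ) :
    ∃ Λ₁ Λ₂ : Fin (sk k) → Finset (ℤ × ℤ),
      (∀ i, memF (k - 1) (Λ₁ i)) ∧ (∀ i, memF (k - 1) (Λ₂ i)) ∧
      (∀ i, Λ = Λ₁ i ∪ Λ₂ i) ∧
      (∀ i, ∀ x ∈ Λ \ Λ₁ i, ∀ y ∈ Λ \ Λ₂ i, dk k ≤ dist1 x y) ∧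
      (∀ i j, i ≠ j → (Λ₁ i ∩ Λ₂ i) ∩ (Λ₁ j ∩ Λ₂ j) = ∅) :=
  bisection_lemma_general k Λ hΛ hΛ'
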